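/- Dimension of the past subgroup: let S be a subspace of V = (𝔽₂²)ⁿ and 0 ≤ i ≤ n. Then the past subgroup Cᵢᵖ = {P ∈ S^⊥ : πᵢ(P) = P} has 𝔽₂-dimension 2i − dim πᵢ(S), where πᵢ(S) is the image of S under the truncation πᵢ. -/

import Mathlib

/-- `V = (𝔽₂²)ⁿ`, the additive group underlying the effective Pauli group `Gₙ`. -/
abbrev PV (n : ℕ) := Fin n → ZMod 2 × ZMod 2

/-- The symplectic form `ω(v,w) = Σᵢ (aᵢb′ᵢ + a′ᵢbᵢ)` over `𝔽₂`. -/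
def sympOmega {n : ℕ} (v w : PV n) : ZMod 2 :=
  ∑ i, ((v i).1 * (w i).2 + (w i).1 * (v i).2)

lemma sympOmega_add_left {n : ℕ} (a b w : PV n) :
    sympOmega (a + b) w = sympOmega a w + sympOmega b w := by
  unfold sympOmega
  rw [← Finset.sum_add_distrib]
  refine Finset.sum_congr rfl fun i _ => ?_
  simp [Prod.fst_add, Prod.snd_add, add_mul, mul_add]
  ring

lemma sympOmega_smul_left {n : ℕ} (c : ZMod 2) (a w : PV n) :
    sympOmega (c • a) w = c * sympOmega a w := by
  unfold sympOmega
  rw [Finset.mul_sum]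
  refine Finset.sum_congr rfl fun i _ => ?_
  simp [Prod.smul_fst, Prod.smul_snd, smul_eq_mul]
  ring

/-- The symplectic orthogonal `S^⊥ = {P ∈ V : ω(P,Q) = 0 for all Q ∈ S}`. -/
def sPerp {n : ℕ} (S : Submodule (ZMod 2) (PV n)) : Submodule (ZMod 2) (PV n) where
  carrier := {P | ∀ Q ∈ S, sympOmega P Q = 0}
  add_mem' := by
    intro a b ha hb Q hQ
    rw [sympOmega_add_left, ha Q hQ, hb Q hQ, add_zero]
  zero_mem' := by
    intro Q hQ
    simp [sympOmega]
  smul_mem' := by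
    intro c a ha Q hQ
    rw [sympOmega_smul_left, ha Q hQ, mul_zero]

/-- The truncation map `πᵢ : V → V`, `(P₁,…,Pₙ) ↦ (P₁,…,Pᵢ,0,…,0)`. -/
def trunc (n i : ℕ) : PV n →ₗ[ZMod 2] PV n where
  toFun v := fun j => if (j : ℕ) < i then v j else 0
  map_add' := by
    intro a b
    funext j
    by_cases h : (j : ℕ) < i <;> simp [h]
  map_smul' := by
    intro c a
    funext j
    by_cases h : (j : ℕ) < i <;> simp [h]

section Aux
variable {n i : ℕ}

lemma sympOmega_comm (v w : PV n) : sympOmega v w = sympOmega w v := by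
  unfold sympOmega
  exact Finset.sum_congr rfl fun j _ => by ring

def sympB (n : ℕ) : LinearMap.BilinForm (ZMod 2) (PV n) :=
  LinearMap.mk₂ (ZMod 2) sympOmega
    (fun a b w => by
      unfold sympOmega; rw [← Finset.sum_add_distrib]
      exact Finset.sum_congr rfl fun j _ => by
        simp [Prod.fst_add, Prod.snd_add]; ring)
    (fun c a w => by
      unfold sympOmega; rw [smul_eq_mul, Finset.mul_sum]
      exact Finset.sum_congr rfl fun j _ => by
        simp [Prod.smul_fst, Prod.smul_snd, smul_eq_mul]; ring)
    (fun a b w => by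
      unfold sympOmega; rw [← Finset.sum_add_distrib]
      exact Finset.sum_congr rfl fun j _ => by
        simp [Prod.fst_add, Prod.snd_add]; ring)
    (fun c a w => by
      unfold sympOmega; rw [smul_eq_mul, Finset.mul_sum]
      exact Finset.sum_congr rfl fun j _ => by
        simp [Prod.smul_fst, Prod.smul_snd, smul_eq_mul]; ring)

@[simp] lemma sympB_apply (v w : PV n) : sympB n v w = sympOmega v w := rfl

lemma sympB_isRefl : (sympB n).IsRefl := fun v w h => by
  simpa [sympOmega_comm v w] using h

lemma exists_pair (p : ZMod 2 × ZMod 2) (hp : p ≠ 0) :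
    ∃ q : ZMod 2 × ZMod 2, p.1 * q.2 + q.1 * p.2 = 1 := by
  revert hp; revert p; decide

lemma sympOmega_single (v : PV n) (j : Fin n) (q : ZMod 2 × ZMod 2) :
    sympOmega v (Pi.single j q) = (v j).1 * q.2 + q.1 * (v j).2 := by
  unfold sympOmega
  rw [Finset.sum_eq_single j]
  · simp
  · intro k _ hk; simp [Pi.single_eq_of_ne hk]
  · simp

lemma mem_pastW_iff {v : PV n} :
    v ∈ LinearMap.ker (LinearMap.id - trunc n i) ↔ ∀ j : Fin n, i ≤ (j : ℕ) → v j = 0 := by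
  rw [LinearMap.mem_ker, LinearMap.sub_apply, LinearMap.id_apply, sub_eq_zero]
  constructor
  · intro h j hj
    have := congrFun h j
    simp only [trunc, LinearMap.coe_mk, AddHom.coe_mk, Nat.not_lt.mpr hj, if_neg,
      not_lt.mpr hj] at this
    simpa [Nat.not_lt.mpr hj] using this
  · intro h
    funext j
    by_cases hj : (j : ℕ) < i
    · simp [trunc, hj]
    · simp [trunc, hj, h j (Nat.le_of_not_lt hj)]

lemma sympB_nondeg : (sympB n).Nondegenerate := by
  refine (LinearMap.IsRefl.nondegenerate_iff_separatingLeft sympB_isRefl).mpr ?_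
  intro v hv
  by_contra hne
  obtain ⟨j, hj⟩ := Function.ne_iff.mp hne
  obtain ⟨q, hq⟩ := exists_pair (v j) (by simpa using hj)
  have := hv (Pi.single j q)
  rw [sympB_apply, sympOmega_single, hq] at this
  exact one_ne_zero this

lemma sympB_restrict_nondeg (hi : i ≤ n) :
    ((sympB n).restrict (LinearMap.ker (LinearMap.id - trunc n i))).Nondegenerate := by
  have hR : ((sympB n).restrict (LinearMap.ker (LinearMap.id - trunc n i))).IsRefl :=
    fun x y h => sympB_isRefl _ _ h
  refine (LinearMap.IsRefl.nondegenerate_iff_separatingLeft hR).mpr ?_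
  rintro ⟨v, hv⟩ h
  rw [Submodule.mk_eq_zero]
  by_contra hne
  obtain ⟨j, hj⟩ := Function.ne_iff.mp hne
  have hji : (j : ℕ) < i := by
    by_contra hge
    exact hj (mem_pastW_iff.mp hv j (Nat.le_of_not_lt hge))
  obtain ⟨q, hq⟩ := exists_pair (v j) (by simpa using hj)
  have hw : Pi.single j q ∈ LinearMap.ker (LinearMap.id - trunc n i) := by
    rw [mem_pastW_iff]
    intro k hk
    have : k ≠ j := by
      intro hkj; subst hkj; omega
    simp [Pi.single_eq_of_ne this]
  have := h ⟨Pi.single j q, hw⟩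
  simp only [LinearMap.BilinForm.restrict_apply, LinearMap.domRestrict_apply,
    sympB_apply] at this
  rw [sympOmega_single, hq] at this
  exact one_ne_zero this

lemma sympOmega_trunc (hi : i ≤ n) {P : PV n}
    (hP : P ∈ LinearMap.ker (LinearMap.id - trunc n i)) (Q : PV n) :
    sympOmega P (trunc n i Q) = sympOmega P Q := by
  unfold sympOmega
  refine Finset.sum_congr rfl fun j _ => ?_
  by_cases hj : (j : ℕ) < i
  · simp [trunc, hj]
  · have hPj : P j = 0 := mem_pastW_iff.mp hP j (Nat.le_of_not_lt hj)
    simp [trunc, hj, hPj]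

lemma key_inf_eq (S : Submodule (ZMod 2) (PV n)) (hi : i ≤ n) :
    sPerp S ⊓ LinearMap.ker (LinearMap.id - trunc n i)
      = LinearMap.ker (LinearMap.id - trunc n i)
        ⊓ (sympB n).orthogonal (S.map (trunc n i)) := by
  ext P
  simp only [Submodule.mem_inf]
  constructor
  · rintro ⟨hperp, hW⟩
    refine ⟨hW, ?_⟩
    rintro R hR
    obtain ⟨Q, hQ, rfl⟩ := hR
    have : sympOmega P (trunc n i Q) = 0 := by
      rw [sympOmega_trunc hi hW Q]; exact hperp Q hQ
    simpa [LinearMap.BilinForm.IsOrtho, sympOmega_comm] using this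
  · rintro ⟨hW, horth⟩
    refine ⟨?_, hW⟩
    intro Q hQ
    have := horth (trunc n i Q) (Submodule.mem_map_of_mem hQ)
    simp only [LinearMap.BilinForm.IsOrtho, sympB_apply] at this
    rw [sympOmega_comm] at this
    rw [← sympOmega_trunc hi hW Q]
    exact this

/-- Extension-by-zero map. -/
def extMap (n : ℕ) (hi : i ≤ n) : (Fin i → ZMod 2 × ZMod 2) →ₗ[ZMod 2] PV n where
  toFun f := fun k => if h : (k : ℕ) < i then f ⟨k, h⟩ else 0
  map_add' a b := by
    funext k
    by_cases h : (k : ℕ) < i <;> simp [h]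
  map_smul' c a := by
    funext k
    by_cases h : (k : ℕ) < i <;> simp [h]

lemma finrank_pastW (hi : i ≤ n) :
    Module.finrank (ZMod 2) ↥(LinearMap.ker (LinearMap.id - trunc n i)) = 2 * i := by
  have hrange : ∀ f, extMap n hi f ∈ LinearMap.ker (LinearMap.id - trunc n i) := by
    intro f
    rw [mem_pastW_iff]
    intro k hk
    simp [extMap, Nat.not_lt.mpr hk]
  let g : (Fin i → ZMod 2 × ZMod 2) →ₗ[ZMod 2]
      ↥(LinearMap.ker (LinearMap.id - trunc n i)) :=
    (extMap n hi).codRestrict _ hrange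
  let f : ↥(LinearMap.ker (LinearMap.id - trunc n i)) →ₗ[ZMod 2]
      (Fin i → ZMod 2 × ZMod 2) :=
    (LinearMap.funLeft (ZMod 2) _ (Fin.castLE hi)) ∘ₗ
      (LinearMap.ker (LinearMap.id - trunc n i)).subtype
  have hfg : ∀ x, f (g x) = x := by
    intro x
    funext j
    simp only [f, g, LinearMap.comp_apply, LinearMap.codRestrict_apply,
      Submodule.coe_subtype, LinearMap.funLeft_apply]
    have hj : ((Fin.castLE hi j : Fin n) : ℕ) < i := j.isLt
    simp [extMap, hj]
  have hgf : ∀ x, g (f x) = x := by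
    rintro ⟨v, hv⟩
    apply Subtype.ext
    funext k
    simp only [f, g, LinearMap.comp_apply, LinearMap.codRestrict_apply,
      Submodule.coe_subtype, LinearMap.funLeft_apply]
    by_cases h : (k : ℕ) < i
    · have : (Fin.castLE hi ⟨(k : ℕ), h⟩) = k := by
        apply Fin.ext; simp
      simp [extMap, h, this]
    · simp [extMap, h, (mem_pastW_iff.mp hv k (Nat.le_of_not_lt h)).symm]
  let e : ↥(LinearMap.ker (LinearMap.id - trunc n i)) ≃ₗ[ZMod 2]
      (Fin i → ZMod 2 × ZMod 2) :=
    { f with invFun := g, left_inv := hgf, right_inv := hfg }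
  rw [e.finrank_eq]
  rw [Module.finrank_pi_fintype]
  simp [Module.finrank_prod, mul_comm]

lemma finrank_PV : Module.finrank (ZMod 2) (PV n) = 2 * n := by
  rw [Module.finrank_pi_fintype]
  simp [Module.finrank_prod, mul_comm]

end Aux

/-- Dimension of the past subgroup: Cᵢᵖ = {P ∈ S^⊥ : πᵢ(P) = P} has 𝔽₂-dimension
2i − dim πᵢ(S). -/
theorem past_subgroup_dim (n : ℕ) (S : Submodule (ZMod 2) (PV n))
    (i : ℕ) (hi : i ≤ n) :
    Module.finrank (ZMod 2)
        ↥(sPerp S ⊓ LinearMap.ker (LinearMap.id - trunc n i))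
      = 2 * i - Module.finrank (ZMod 2) ↥(S.map (trunc n i)) := by
  classical
  set W := LinearMap.ker (LinearMap.id - trunc n i) with hW
  set M := S.map (trunc n i) with hM
  have hMW : M ≤ W := by
    rintro R ⟨Q, hQ, rfl⟩
    rw [mem_pastW_iff]
    intro k hk
    simp [trunc, Nat.not_lt.mpr hk]
  have hWrank : Module.finrank (ZMod 2) ↥W = 2 * i := finrank_pastW hi
  have hVrank : Module.finrank (ZMod 2) (PV n) = 2 * n := finrank_PV
  -- finrank M + finrank orth M = 2n
  have horthM : Module.finrank (ZMod 2) ↥M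
      + Module.finrank (ZMod 2) ↥((sympB n).orthogonal M)
      = 2 * n := by
    have := LinearMap.BilinForm.finrank_add_finrank_orthogonal
      (B := sympB n) sympB_isRefl M
    rw [LinearMap.BilinForm.orthogonal_top_eq_bot sympB_nondeg, inf_bot_eq,
      finrank_bot, add_zero, hVrank] at this
    exact this
  -- W ⊔ orth M = ⊤
  have hsup : W ⊔ (sympB n).orthogonal M = ⊤ := by
    have hcompl := LinearMap.BilinForm.isCompl_orthogonal_of_restrict_nondegenerate
      (B := sympB n) sympB_isRefl (sympB_restrict_nondeg hi)
    rw [← hW] at hcompl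
    have h1 : W ⊔ (sympB n).orthogonal W = ⊤ := codisjoint_iff.mp hcompl.codisjoint
    have h2 : (sympB n).orthogonal W ≤ (sympB n).orthogonal M :=
      LinearMap.BilinForm.orthogonal_le hMW
    exact top_le_iff.mp (h1 ▸ sup_le_sup_left h2 W)
  have hdim := Submodule.finrank_sup_add_finrank_inf_eq W ((sympB n).orthogonal M)
  rw [hsup, finrank_top, hVrank] at hdim
  have hMle : Module.finrank (ZMod 2) ↥M ≤ 2 * i := by
    rw [← hWrank]; exact Submodule.finrank_mono hMW
  rw [key_inf_eq S hi, ← hM, ← hW]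
  omega
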